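/- With notation as above (β a simple root of f, h = z−β, g = f h⁻¹, M = hA + xA), the right A-module M is projective. Moreover, M is a generator of Mod-A if and only if gcd(σ⁻¹(g), h) = 1 in k[z]. -/

import Mathlib

open Polynomial

noncomputable def pshift (k : Type) [Field k] (i : ℤ) (p : k[X]) : k[X] :=
  p.comp (X + C (i : k))

noncomputable def gwaY (k : Type) [Field k] (Q : Type) [Ring Q]
    (σ : RatFunc k ≃+* RatFunc k) (φ : RatFunc k →+* Q) (x : Qˣ) (f : k[X]) : Q :=
  φ (σ.symm (algebraMap k[X] (RatFunc k) f)) * ((x⁻¹ : Qˣ) : Q)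

noncomputable def gwaSubring (k : Type) [Field k] (Q : Type) [Ring Q]
    (σ : RatFunc k ≃+* RatFunc k) (φ : RatFunc k →+* Q) (x : Qˣ) (f : k[X]) : Subring Q :=
  Subring.closure
    ({(x : Q), gwaY k Q σ φ x f} ∪
      Set.range fun p : k[X] => φ (algebraMap k[X] (RatFunc k) p))

noncomputable def subRightModule (k : Type) [Field k] (Q : Type) [Ring Q]
    (σ : RatFunc k ≃+* RatFunc k) (φ : RatFunc k →+* Q) (x : Qˣ) (f : k[X])
    (M : AddSubgroup Q)
    (hsub : ∀ w ∈ M, ∀ u ∈ gwaSubring k Q σ φ x f, w * u ∈ M) :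
    Module ((gwaSubring k Q σ φ x f)ᵐᵒᵖ) ↥M where
  smul a m := ⟨(m : Q) * ((MulOpposite.unop a : gwaSubring k Q σ φ x f) : Q),
    hsub _ m.2 _ (MulOpposite.unop a).2⟩
  one_smul m := Subtype.ext (mul_one _)
  mul_smul a b m := Subtype.ext ((mul_assoc _ _ _).symm)
  smul_zero a := Subtype.ext (zero_mul _)
  smul_add a m n := Subtype.ext (add_mul _ _ _)
  add_smul a b m := Subtype.ext (mul_add _ _ _)
  zero_smul m := Subtype.ext (mul_zero _)

section Aux
variable {k : Type} [Field k]

theorem pshift_pshift (i j : ℤ) (p : k[X]) :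
    pshift k i (pshift k j p) = pshift k (i + j) p := by
  unfold pshift
  rw [comp_assoc]
  congr 1
  simp [add_comp]
  push_cast
  ring

theorem pshift_zero (p : k[X]) : pshift k 0 p = p := by
  simp [pshift]

theorem pshift_mul (i : ℤ) (p q : k[X]) :
    pshift k i (p * q) = pshift k i p * pshift k i q := mul_comp p q _

theorem pshift_add (i : ℤ) (p q : k[X]) :
    pshift k i (p + q) = pshift k i p + pshift k i q := add_comp

theorem pshift_one (i : ℤ) : pshift k i (1 : k[X]) = 1 := one_comp

theorem pshift_zero' (i : ℤ) : pshift k i (0 : k[X]) = 0 := zero_comp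

theorem pshift_ne_zero (i : ℤ) {p : k[X]} (hp : p ≠ 0) : pshift k i p ≠ 0 := by
  intro h
  apply hp
  have := congrArg (pshift k (-i)) h
  rwa [pshift_pshift, neg_add_cancel, pshift_zero, pshift_zero'] at this

variable (σ : RatFunc k ≃+* RatFunc k)

theorem sigma_am (hσ : ∀ p : k[X], σ (algebraMap k[X] (RatFunc k) p)
      = algebraMap k[X] (RatFunc k) (p.comp (X + 1))) (p : k[X]) :
    σ (algebraMap k[X] (RatFunc k) p) = algebraMap k[X] (RatFunc k) (pshift k 1 p) := by
  rw [hσ]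
  congr 2
  simp [pshift]

theorem sigma_symm_am (hσ : ∀ p : k[X], σ (algebraMap k[X] (RatFunc k) p)
      = algebraMap k[X] (RatFunc k) (p.comp (X + 1))) (p : k[X]) :
    σ.symm (algebraMap k[X] (RatFunc k) p)
      = algebraMap k[X] (RatFunc k) (pshift k (-1) p) := by
  have h := sigma_am σ hσ (pshift k (-1) p)
  rw [pshift_pshift] at h
  norm_num at h
  rw [pshift_zero] at h
  calc σ.symm (algebraMap k[X] (RatFunc k) p)
      = σ.symm (σ (algebraMap k[X] (RatFunc k) (pshift k (-1) p))) := by rw [h]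
    _ = _ := σ.symm_apply_apply _

theorem sigma_pow_am (hσ : ∀ p : k[X], σ (algebraMap k[X] (RatFunc k) p)
      = algebraMap k[X] (RatFunc k) (p.comp (X + 1))) : ∀ (i : ℤ) (p : k[X]),
    (σ ^ i) (algebraMap k[X] (RatFunc k) p)
      = algebraMap k[X] (RatFunc k) (pshift k i p) := by
  have key : ∀ (n : ℕ) (p : k[X]), (σ ^ (n:ℤ)) (algebraMap k[X] (RatFunc k) p)
      = algebraMap k[X] (RatFunc k) (pshift k n p) := by
    intro n
    induction n with
    | zero => intro p; rw [Nat.cast_zero, pshift_zero]; rfl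
    | succ m ih =>
        intro p
        have h2 : (((m+1:ℕ)) : ℤ) = (m:ℤ) + 1 := by push_cast; ring
        rw [h2, zpow_add_one]
        show (σ ^ (m:ℤ)) (σ (algebraMap k[X] (RatFunc k) p)) = _
        rw [sigma_am σ hσ, ih, pshift_pshift]
  have keyneg : ∀ (n : ℕ) (p : k[X]), (σ ^ (-(n:ℤ))) (algebraMap k[X] (RatFunc k) p)
      = algebraMap k[X] (RatFunc k) (pshift k (-(n:ℤ)) p) := by
    intro n
    induction n with
    | zero => intro p; rw [Nat.cast_zero, neg_zero, pshift_zero]; rfl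
    | succ m ih =>
        intro p
        have h2 : (-((m+1:ℕ):ℤ)) = -(m:ℤ) + (-1) := by push_cast; ring
        rw [h2, zpow_add, zpow_neg_one]
        show (σ ^ (-(m:ℤ))) (σ.symm (algebraMap k[X] (RatFunc k) p)) = _
        rw [sigma_symm_am σ hσ, ih, pshift_pshift]
  intro i p
  rcases le_or_gt 0 i with h | h
  · obtain ⟨n, rfl⟩ := Int.eq_ofNat_of_zero_le h
    exact key n p
  · obtain ⟨n, rfl⟩ : ∃ n : ℕ, i = -(n:ℤ) := ⟨i.natAbs, by omega⟩
    exact keyneg n p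

end Aux

section Aux2
variable {k : Type} [Field k] {Q : Type} [Ring Q]
variable (σ : RatFunc k ≃+* RatFunc k) (φ : RatFunc k →+* Q) (x : Qˣ)

/-- basis monomial -/
noncomputable def Fn (i : ℤ) (q : RatFunc k) : Q := φ q * ((x ^ i : Qˣ) : Q)

theorem Fn_zero (i : ℤ) : Fn φ x i 0 = 0 := by simp [Fn]

theorem Fn_add (i : ℤ) (q r : RatFunc k) :
    Fn φ x i (q + r) = Fn φ x i q + Fn φ x i r := by simp [Fn, add_mul]

theorem xzpow_phi (hx : ∀ q : RatFunc k, (x : Q) * φ q = φ (σ q) * (x : Q)) :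
    ∀ (i : ℤ) (q : RatFunc k),
      ((x ^ i : Qˣ) : Q) * φ q = φ ((σ ^ i) q) * ((x ^ i : Qˣ) : Q) := by
  have hxinv : ∀ q : RatFunc k, ((x⁻¹ : Qˣ) : Q) * φ q = φ (σ.symm q) * ((x⁻¹ : Qˣ) : Q) := by
    intro q
    have h := hx (σ.symm q)
    rw [σ.apply_symm_apply] at h
    calc ((x⁻¹ : Qˣ) : Q) * φ q = ((x⁻¹:Qˣ):Q) * (φ q * (x:Q)) * ((x⁻¹:Qˣ):Q) := by
          rw [mul_assoc, mul_assoc]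
          simp
      _ = ((x⁻¹:Qˣ):Q) * ((x:Q) * φ (σ.symm q)) * ((x⁻¹:Qˣ):Q) := by rw [← h]
      _ = φ (σ.symm q) * ((x⁻¹:Qˣ):Q) := by
          rw [← mul_assoc]
          simp
  have key : ∀ (n : ℕ) (q : RatFunc k),
      ((x ^ (n:ℤ) : Qˣ) : Q) * φ q = φ ((σ ^ (n:ℤ)) q) * ((x ^ (n:ℤ) : Qˣ) : Q) := by
    intro n
    induction n with
    | zero => intro q; simp
    | succ m ih =>
        intro q
        have h2 : (((m+1:ℕ)) : ℤ) = (m:ℤ) + 1 := by push_cast; ring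
        rw [h2, zpow_add_one, zpow_add_one]
        have hσq : (σ ^ (m:ℤ) * σ) q = (σ ^ (m:ℤ)) (σ q) := rfl
        rw [hσq]
        push_cast [Units.val_mul]
        rw [mul_assoc, hx q, ← mul_assoc, ih (σ q), mul_assoc]
  have keyneg : ∀ (n : ℕ) (q : RatFunc k),
      ((x ^ (-(n:ℤ)) : Qˣ) : Q) * φ q = φ ((σ ^ (-(n:ℤ))) q) * ((x ^ (-(n:ℤ)) : Qˣ) : Q) := by
    intro n
    induction n with
    | zero => intro q; simp
    | succ m ih =>
        intro q
        have h2 : (-((m+1:ℕ):ℤ)) = -(m:ℤ) + (-1) := by push_cast; ring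
        rw [h2, zpow_add, zpow_add]
        have hσq : (σ ^ (-(m:ℤ)) * σ ^ (-1:ℤ)) q = (σ ^ (-(m:ℤ))) (σ.symm q) := rfl
        rw [hσq]
        push_cast [Units.val_mul, zpow_neg_one]
        rw [mul_assoc, hxinv q, ← mul_assoc, ih (σ.symm q), mul_assoc]
  intro i q
  rcases le_or_gt 0 i with h | h
  · obtain ⟨n, rfl⟩ := Int.eq_ofNat_of_zero_le h
    exact key n q
  · obtain ⟨n, rfl⟩ : ∃ n : ℕ, i = -(n:ℤ) := ⟨i.natAbs, by omega⟩
    exact keyneg n q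

variable (hbasis : ∀ w : Q, ∃! c : ℤ →₀ RatFunc k,
    w = c.sum fun i q => φ q * ((x ^ i : Qˣ) : Q))

/-- the coefficient finsupp of an element of `Q` -/
noncomputable def CQ (w : Q) : ℤ →₀ RatFunc k := (hbasis w).choose

theorem CQ_spec (w : Q) : w = (CQ φ x hbasis w).sum (Fn φ x) :=
  (hbasis w).choose_spec.1

theorem CQ_unique {w : Q} {c : ℤ →₀ RatFunc k} (h : w = c.sum (Fn φ x)) :
    CQ φ x hbasis w = c := ((hbasis w).choose_spec.2 c h).symm

theorem CQ_zero : CQ φ x hbasis 0 = 0 :=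
  CQ_unique φ x hbasis (by rw [Finsupp.sum_zero_index])

theorem CQ_add (w w' : Q) :
    CQ φ x hbasis (w + w') = CQ φ x hbasis w + CQ φ x hbasis w' := by
  apply CQ_unique
  rw [Finsupp.sum_add_index' (fun i => Fn_zero φ x i) (fun i => Fn_add φ x i)]
  rw [← CQ_spec, ← CQ_spec]

theorem CQ_neg (w : Q) : CQ φ x hbasis (-w) = -(CQ φ x hbasis w) := by
  apply CQ_unique
  rw [Finsupp.sum_neg_index (fun i => Fn_zero φ x i)]
  have : ((CQ φ x hbasis w).sum fun a b => Fn φ x a (-b))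
      = -((CQ φ x hbasis w).sum (Fn φ x)) := by
    rw [← Finsupp.sum_neg]
    apply Finsupp.sum_congr
    intro i _
    simp [Fn, neg_mul]
  rw [this, ← CQ_spec]

theorem CQ_one : CQ φ x hbasis 1 = Finsupp.single 0 1 := by
  apply CQ_unique
  rw [Finsupp.sum_single_index (Fn_zero φ x 0)]
  simp [Fn]

theorem CQ_phi (q : RatFunc k) : CQ φ x hbasis (φ q) = Finsupp.single 0 q := by
  apply CQ_unique
  rw [Finsupp.sum_single_index (Fn_zero φ x 0)]
  simp [Fn]

theorem CQ_x : CQ φ x hbasis (x : Q) = Finsupp.single 1 1 := by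
  apply CQ_unique
  rw [Finsupp.sum_single_index (Fn_zero φ x 1)]
  simp [Fn]

/-- convolution of coefficient finsupps -/
noncomputable def conv (c c' : ℤ →₀ RatFunc k) : ℤ →₀ RatFunc k :=
  c.sum fun i q => c'.sum fun j r => Finsupp.single (i + j) (q * (σ ^ i) r)

theorem CQ_mul (hx : ∀ q : RatFunc k, (x : Q) * φ q = φ (σ q) * (x : Q)) (w w' : Q) :
    CQ φ x hbasis (w * w') = conv σ (CQ φ x hbasis w) (CQ φ x hbasis w') := by
  apply CQ_unique
  set c := CQ φ x hbasis w
  set c' := CQ φ x hbasis w'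
  have hw : w = c.sum (Fn φ x) := CQ_spec φ x hbasis w
  have hw' : w' = c'.sum (Fn φ x) := CQ_spec φ x hbasis w'
  have lhs : w * w' = c.sum fun i q => c'.sum fun j r => Fn φ x (i + j) (q * (σ ^ i) r) := by
    rw [hw, hw', Finsupp.sum_mul]
    apply Finsupp.sum_congr
    intro i _
    rw [Finsupp.mul_sum]
    apply Finsupp.sum_congr
    intro j _
    show Fn φ x i (c i) * Fn φ x j (c' j) = _
    unfold Fn
    rw [mul_assoc, ← mul_assoc ((x ^ i : Qˣ) : Q), xzpow_phi σ φ x hx i (c' j),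
      mul_assoc, ← Units.val_mul, ← zpow_add, ← mul_assoc, ← map_mul]
  rw [lhs]
  unfold conv
  rw [Finsupp.sum_sum_index (fun a => Fn_zero φ x a) (fun a => Fn_add φ x a)]
  apply Finsupp.sum_congr
  intro i _
  rw [Finsupp.sum_sum_index (fun a => Fn_zero φ x a) (fun a => Fn_add φ x a)]
  apply Finsupp.sum_congr
  intro j _
  rw [Finsupp.sum_single_index (Fn_zero φ x (i + j))]

theorem conv_apply (c c' : ℤ →₀ RatFunc k) (n : ℤ) :
    conv σ c c' n = c.sum fun i q => c'.sum fun j r =>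
      if i + j = n then q * (σ ^ i) r else 0 := by
  unfold conv
  rw [Finsupp.sum_apply]
  apply Finsupp.sum_congr
  intro i _
  rw [Finsupp.sum_apply]
  apply Finsupp.sum_congr
  intro j _
  rw [Finsupp.single_apply]

end Aux2

section Aux3
variable {k : Type} [Field k]

/-- the denominator-control polynomials -/
noncomputable def dpoly (k : Type) [Field k] (f : k[X]) (i : ℤ) : k[X] :=
  ∏ m ∈ Finset.range (-i).toNat, pshift k (-((m:ℤ)+1)) f

variable (f : k[X])

theorem dpoly_nonneg {i : ℤ} (h : 0 ≤ i) : dpoly k f i = 1 := by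
  unfold dpoly
  have : (-i).toNat = 0 := by omega
  rw [this]
  simp

theorem dpoly_step {i : ℤ} (h : i ≤ 0) :
    dpoly k f (i - 1) = dpoly k f i * pshift k (i - 1) f := by
  unfold dpoly
  have h1 : (-(i-1)).toNat = (-i).toNat + 1 := by omega
  rw [h1, Finset.prod_range_succ]
  congr 2
  omega

theorem dpoly_dvd_pred (i : ℤ) : dpoly k f i ∣ dpoly k f (i - 1) := by
  rcases le_or_gt i 0 with h | h
  · rw [dpoly_step f h]; exact dvd_mul_right _ _
  · rw [dpoly_nonneg f (by omega : (0:ℤ) ≤ i)]; exact one_dvd _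

theorem dpoly_dvd_of_le {i j : ℤ} (h : i ≤ j) : dpoly k f j ∣ dpoly k f i := by
  have key : ∀ n : ℕ, dpoly k f j ∣ dpoly k f (j - n) := by
    intro n
    induction n with
    | zero => simp
    | succ m ih =>
        have : (j - (↑m + 1) : ℤ) = (j - m) - 1 := by ring
        rw [Nat.cast_add, Nat.cast_one, this]
        exact ih.trans (dpoly_dvd_pred f _)
  have := key (j - i).toNat
  rwa [show (j - (↑(j - i).toNat) : ℤ) = i by omega] at this

theorem dpoly_key_dvd (i j : ℤ) :
    dpoly k f (i + j) ∣ dpoly k f i * pshift k i (dpoly k f j) := by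
  rcases le_or_gt 0 j with h | h
  · rw [dpoly_nonneg f h, pshift_one, mul_one]
    exact dpoly_dvd_of_le f (by omega)
  · -- downward induction on j ≤ 0
    have main : ∀ (n : ℕ) (i : ℤ), dpoly k f (i + (-(n:ℤ)))
        ∣ dpoly k f i * pshift k i (dpoly k f (-(n:ℤ))) := by
      intro n
      induction n with
      | zero => intro i; simp [dpoly_nonneg f le_rfl, pshift_one]
      | succ m ih =>
          intro i
          have hm : (-((m+1:ℕ):ℤ)) = (-(m:ℤ)) - 1 := by push_cast; ring
          rw [hm, dpoly_step f (by omega : (-(m:ℤ)) ≤ 0), pshift_mul, pshift_pshift]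
          have h1 : dpoly k f (i + -(m:ℤ))
              ∣ dpoly k f i * pshift k i (dpoly k f (-(m:ℤ))) := ih i
          have h2 : dpoly k f (i + (-(m:ℤ) - 1))
              ∣ dpoly k f (i + -(m:ℤ)) * pshift k (i + (-(m:ℤ) - 1)) f := by
            rcases le_or_gt (i + -(m:ℤ)) 0 with hc | hc
            · rw [show i + (-(m:ℤ) - 1) = (i + -(m:ℤ)) - 1 by ring,
                dpoly_step f hc]
            · rw [dpoly_nonneg f (by omega : (0:ℤ) ≤ i + (-(m:ℤ) - 1))]
              exact one_dvd _
          calc dpoly k f (i + (-(m:ℤ) - 1))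
              ∣ dpoly k f (i + -(m:ℤ)) * pshift k (i + (-(m:ℤ) - 1)) f := h2
            _ ∣ (dpoly k f i * pshift k i (dpoly k f (-(m:ℤ)))) *
                  pshift k (i + (-(m:ℤ) - 1)) f := mul_dvd_mul_right h1 _
            _ = dpoly k f i * (pshift k i (dpoly k f (-(m:ℤ))) *
                  pshift k (i + (-(m:ℤ) - 1)) f) := by ring
    obtain ⟨n, rfl⟩ : ∃ n : ℕ, j = -(n:ℤ) := ⟨j.natAbs, by omega⟩
    exact main n i

/-- the coefficient constraint subgroups -/
noncomputable def Vgrp (f : k[X]) (i : ℤ) : AddSubgroup (RatFunc k) where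
  carrier := {q | ∃ t : k[X], q = algebraMap k[X] (RatFunc k) (dpoly k f i * t)}
  zero_mem' := ⟨0, by simp⟩
  add_mem' := by
    rintro a b ⟨t, rfl⟩ ⟨t', rfl⟩
    exact ⟨t + t', by rw [← map_add, mul_add]⟩
  neg_mem' := by
    rintro a ⟨t, rfl⟩
    exact ⟨-t, by rw [← map_neg, mul_neg]⟩

theorem Vgrp_mul (σ : RatFunc k ≃+* RatFunc k)
    (hσ : ∀ p : k[X], σ (algebraMap k[X] (RatFunc k) p)
      = algebraMap k[X] (RatFunc k) (p.comp (X + 1)))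
    {i j : ℤ} {q r : RatFunc k} (hq : q ∈ Vgrp f i) (hr : r ∈ Vgrp f j) :
    q * (σ ^ i) r ∈ Vgrp f (i + j) := by
  obtain ⟨t, rfl⟩ := hq
  obtain ⟨t', rfl⟩ := hr
  obtain ⟨e, he⟩ := dpoly_key_dvd f i j
  refine ⟨e * t * pshift k i t', ?_⟩
  rw [sigma_pow_am σ hσ, ← map_mul]
  congr 1
  rw [pshift_mul, show dpoly k f i * t * (pshift k i (dpoly k f j) * pshift k i t')
      = (dpoly k f i * pshift k i (dpoly k f j)) * (t * pshift k i t') from by ring, he]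
  ring

end Aux3

section Aux4
variable {k : Type} [Field k] {Q : Type} [Ring Q]
variable (σ : RatFunc k ≃+* RatFunc k) (φ : RatFunc k →+* Q) (x : Qˣ) (f : k[X])
variable (hσ : ∀ p : k[X], σ (algebraMap k[X] (RatFunc k) p)
      = algebraMap k[X] (RatFunc k) (p.comp (X + 1)))
variable (hx : ∀ q : RatFunc k, (x : Q) * φ q = φ (σ q) * (x : Q))
variable (hbasis : ∀ w : Q, ∃! c : ℤ →₀ RatFunc k,
    w = c.sum fun i q => φ q * ((x ^ i : Qˣ) : Q))

theorem sigma_zpow_zero (r : RatFunc k) : (σ ^ (0:ℤ)) r = r := rfl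
theorem sigma_zpow_one (r : RatFunc k) : (σ ^ (1:ℤ)) r = σ r := rfl

theorem finsupp_sum_mem {α M N : Type*} [Zero M] [AddCommGroup N] (S : AddSubgroup N)
    (c : α →₀ M) (g : α → M → N) (h : ∀ a ∈ c.support, g a (c a) ∈ S) : c.sum g ∈ S :=
  AddSubgroup.sum_mem S h

theorem dpoly_neg_one : dpoly k f (-1) = pshift k (-1) f := by
  unfold dpoly
  norm_num

/-- the subring of elements with controlled coefficients -/
noncomputable def Bsub : Subring Q where
  carrier := {w | ∀ n : ℤ, CQ φ x hbasis w n ∈ Vgrp f n}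
  zero_mem' := by intro n; rw [CQ_zero]; exact (Vgrp f n).zero_mem
  one_mem' := by
    intro n
    rw [CQ_one, Finsupp.single_apply]
    split
    · next h => exact ⟨1, by simp [← h, dpoly_nonneg f le_rfl]⟩
    · exact (Vgrp f n).zero_mem
  add_mem' := by
    intro a b ha hb n
    rw [CQ_add, Finsupp.add_apply]
    exact (Vgrp f n).add_mem (ha n) (hb n)
  neg_mem' := by
    intro a ha n
    rw [CQ_neg, Finsupp.neg_apply]
    exact (Vgrp f n).neg_mem (ha n)
  mul_mem' := by
    intro a b ha hb n
    rw [CQ_mul σ φ x hbasis hx, conv_apply]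
    apply finsupp_sum_mem
    intro i _
    apply finsupp_sum_mem
    intro j _
    split
    · next h => exact h ▸ Vgrp_mul f σ hσ (ha i) (hb j)
    · exact (Vgrp f n).zero_mem

theorem gwa_le_Bsub : gwaSubring k Q σ φ x f ≤ Bsub σ φ x f hσ hx hbasis := by
  apply Subring.closure_le.2
  rintro w (h | ⟨p, rfl⟩)
  · rcases h with h | h
    · subst h
      intro n
      rw [CQ_x, Finsupp.single_apply]
      split
      · next h => exact ⟨1, by simp [← h, dpoly_nonneg f (by norm_num : (0:ℤ) ≤ 1)]⟩
      · exact (Vgrp f n).zero_mem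
    · rw [Set.mem_singleton_iff] at h
      subst h
      intro n
      have hy : gwaY k Q σ φ x f
          = (Finsupp.single (-1 : ℤ) (σ.symm (algebraMap k[X] (RatFunc k) f))).sum (Fn φ x) := by
        rw [Finsupp.sum_single_index (Fn_zero φ x (-1))]
        unfold gwaY Fn
        rw [zpow_neg_one]
      rw [CQ_unique φ x hbasis hy, Finsupp.single_apply]
      split
      · next h =>
        refine ⟨1, ?_⟩
        rw [← h, dpoly_neg_one, mul_one, sigma_symm_am σ hσ]
      · exact (Vgrp f n).zero_mem
  · intro n
    rw [CQ_phi, Finsupp.single_apply]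
    split
    · next h => exact ⟨p, by rw [← h, dpoly_nonneg f le_rfl, one_mul]⟩
    · exact (Vgrp f n).zero_mem

theorem CQ_mul_phi (hx : ∀ q : RatFunc k, (x : Q) * φ q = φ (σ q) * (x : Q))
    (w : Q) (q₀ : RatFunc k) (n : ℤ) :
    CQ φ x hbasis (w * φ q₀) n = CQ φ x hbasis w n * (σ ^ n) q₀ := by
  rw [CQ_mul σ φ x hbasis hx, CQ_phi, conv_apply]
  have h1 : ((CQ φ x hbasis w).sum fun i q => (Finsupp.single (0:ℤ) q₀).sum fun j r =>
      if i + j = n then q * (σ ^ i) r else 0)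
      = (CQ φ x hbasis w).sum fun i q => if i = n then q * (σ ^ i) q₀ else 0 := by
    apply Finsupp.sum_congr
    intro i _
    rw [Finsupp.sum_single_index (by simp)]
    simp only [add_zero]
  rw [h1, Finsupp.sum_ite_eq']
  split
  · rfl
  · next h =>
    rw [Finsupp.notMem_support_iff.1 h, zero_mul]

theorem CQ_mul_x (hx : ∀ q : RatFunc k, (x : Q) * φ q = φ (σ q) * (x : Q))
    (w : Q) (n : ℤ) :
    CQ φ x hbasis (w * (x:Q)) n = CQ φ x hbasis w (n - 1) := by
  rw [CQ_mul σ φ x hbasis hx, CQ_x, conv_apply]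
  have h1 : ((CQ φ x hbasis w).sum fun i q => (Finsupp.single (1:ℤ) (1:RatFunc k)).sum fun j r =>
      if i + j = n then q * (σ ^ i) r else 0)
      = (CQ φ x hbasis w).sum fun i q => if i = n - 1 then q else 0 := by
    apply Finsupp.sum_congr
    intro i _
    rw [Finsupp.sum_single_index (by simp), map_one, mul_one]
    exact if_congr (by omega) rfl rfl
  rw [h1, Finsupp.sum_ite_eq']
  split
  · rfl
  · next h => rw [Finsupp.notMem_support_iff.1 h]

theorem CQ_mul_x_dead (hx : ∀ q : RatFunc k, (x : Q) * φ q = φ (σ q) * (x : Q))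
    (w : Q) (n : ℤ) :
    True := trivial

theorem CQ_phi_mul (hx : ∀ q : RatFunc k, (x : Q) * φ q = φ (σ q) * (x : Q))
    (w : Q) (q₀ : RatFunc k) (n : ℤ) :
    CQ φ x hbasis (φ q₀ * w) n = q₀ * CQ φ x hbasis w n := by
  rw [CQ_mul σ φ x hbasis hx, CQ_phi, conv_apply]
  rw [Finsupp.sum_single_index (by simp)]
  have h1 : ((CQ φ x hbasis w).sum fun j r => if (0:ℤ) + j = n then q₀ * (σ ^ (0:ℤ)) r else 0)
      = (CQ φ x hbasis w).sum fun j r => if j = n then q₀ * r else 0 := by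
    apply Finsupp.sum_congr
    intro j _
    rw [sigma_zpow_zero (σ := σ), zero_add]
  rw [h1, Finsupp.sum_ite_eq']
  split
  · rfl
  · next h => rw [Finsupp.notMem_support_iff.1 h, mul_zero]

theorem CQ_x_mul (hx : ∀ q : RatFunc k, (x : Q) * φ q = φ (σ q) * (x : Q))
    (w : Q) (n : ℤ) :
    CQ φ x hbasis ((x:Q) * w) n = σ (CQ φ x hbasis w (n - 1)) := by
  rw [CQ_mul σ φ x hbasis hx, CQ_x, conv_apply]
  rw [Finsupp.sum_single_index (by simp)]
  have h1 : ((CQ φ x hbasis w).sum fun j r => if (1:ℤ) + j = n then 1 * (σ ^ (1:ℤ)) r else 0)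
      = (CQ φ x hbasis w).sum fun j r => if j = n - 1 then σ r else 0 := by
    apply Finsupp.sum_congr
    intro j _
    rw [sigma_zpow_one, one_mul]
    exact if_congr (by omega) rfl rfl
  rw [h1, Finsupp.sum_ite_eq']
  split
  · rfl
  · next h => rw [Finsupp.notMem_support_iff.1 h, map_zero]

end Aux4

section Aux5
variable {k : Type} [Field k]

noncomputable def pshiftHom (k : Type) [Field k] (i : ℤ) : k[X] →+* k[X] where
  toFun := pshift k i
  map_one' := pshift_one i
  map_mul' := pshift_mul i
  map_zero' := pshift_zero' i
  map_add' := pshift_add i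

theorem pshift_prod {α : Type*} (i : ℤ) (s : Finset α) (F : α → k[X]) :
    pshift k i (∏ m ∈ s, F m) = ∏ m ∈ s, pshift k i (F m) :=
  map_prod (pshiftHom k i) F s

variable (β : k) (f g : k[X])

theorem eval_f_zero (hfact : f = (X - C β) * g) : f.eval β = 0 := by
  rw [hfact, eval_mul, eval_sub, eval_X, eval_C, sub_self, zero_mul]

theorem eval_shift_f_zero (hfact : f = (X - C β) * g)
    (hroot : (pshift k (-1) g).eval β = 0) : (pshift k (-1) f).eval β = 0 := by
  rw [hfact, pshift_mul, eval_mul, hroot, mul_zero]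

theorem eval_dd (hfact : f = (X - C β) * g)
    (hroot : (pshift k (-1) g).eval β = 0) (i : ℤ) (hi : i ≠ 0) :
    (dpoly k f i * pshift k i (dpoly k f (-i))).eval β = 0 := by
  rcases Int.lt_or_lt_of_ne hi with h | h
  · -- i < 0 : dpoly i has the factor pshift (-1) f at m = 0
    rw [eval_mul]
    have : (dpoly k f i).eval β = 0 := by
      unfold dpoly
      rw [eval_prod]
      apply Finset.prod_eq_zero (i := 0)
      · simp [Finset.mem_range]; omega
      · norm_num
        exact eval_shift_f_zero β f g hfact hroot
    rw [this, zero_mul]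
  · -- i > 0 : pshift i (dpoly (-i)) has the factor f at m = i.toNat - 1
    rw [eval_mul]
    have : (pshift k i (dpoly k f (-i))).eval β = 0 := by
      unfold dpoly
      rw [pshift_prod, eval_prod]
      apply Finset.prod_eq_zero (i := i.toNat - 1)
      · simp [Finset.mem_range]; omega
      · rw [pshift_pshift]
        have : i + -((((i.toNat - 1:ℕ)):ℤ) + 1) = 0 := by omega
        rw [this, pshift_zero]
        exact eval_f_zero β f g hfact
    rw [this, mul_zero]

/-- rational functions which are polynomials vanishing at β -/
noncomputable def V0 (β : k) : AddSubgroup (RatFunc k) where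
  carrier := {q | ∃ t : k[X], t.eval β = 0 ∧ q = algebraMap k[X] (RatFunc k) t}
  zero_mem' := ⟨0, by simp⟩
  add_mem' := by
    rintro a b ⟨t, ht, rfl⟩ ⟨t', ht', rfl⟩
    exact ⟨t + t', by simp [ht, ht'], by rw [map_add]⟩
  neg_mem' := by
    rintro a ⟨t, ht, rfl⟩
    exact ⟨-t, by simp [ht], by rw [map_neg]⟩

variable (σ : RatFunc k ≃+* RatFunc k)

theorem sigma_pow_succ (i : ℤ) (r : RatFunc k) :
    (σ ^ (i+1)) r = (σ ^ i) (σ r) := by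
  rw [zpow_add_one]; rfl

theorem key_term
    (hσ : ∀ p : k[X], σ (algebraMap k[X] (RatFunc k) p)
      = algebraMap k[X] (RatFunc k) (p.comp (X + 1)))
    (hfact : f = (X - C β) * g)
    (hroot : (pshift k (-1) g).eval β = 0)
    (i : ℤ) (q r₁ r₂ : RatFunc k)
    (h1 : q * (σ ^ i) (algebraMap k[X] (RatFunc k) (X - C β)) ∈ Vgrp f i)
    (h2 : q ∈ Vgrp f (i+1))
    (ha : r₁ ∈ Vgrp f (-i))
    (hb : r₂ ∈ Vgrp f (-i-1)) :
    q * (σ ^ i) (algebraMap k[X] (RatFunc k) (X - C β) * r₁ + σ r₂) ∈ V0 β := by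
  have expand : q * (σ ^ i) (algebraMap k[X] (RatFunc k) (X - C β) * r₁ + σ r₂)
      = (q * (σ ^ i) (algebraMap k[X] (RatFunc k) (X - C β))) * (σ ^ i) r₁
        + q * (σ ^ (i+1)) r₂ := by
    rw [map_add, map_mul, sigma_pow_succ]
    ring
  rw [expand]
  apply (V0 β).add_mem
  · -- term A
    obtain ⟨t, ht⟩ := h1
    obtain ⟨t₁, rfl⟩ := ha
    rw [ht, sigma_pow_am σ hσ, ← map_mul]
    by_cases hi : i = 0
    · subst hi
      obtain ⟨t₂, ht₂⟩ := h2
      refine ⟨dpoly k f 0 * t * pshift k 0 (dpoly k f (-0) * t₁), ?_, rfl⟩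
      rw [show ((0:ℤ) + 1) = 1 from by norm_num,
        dpoly_nonneg f (by norm_num : (0:ℤ) ≤ 1), one_mul] at ht₂
      have hq : q * (σ ^ (0:ℤ)) (algebraMap k[X] (RatFunc k) (X - C β))
          = algebraMap k[X] (RatFunc k) (t₂ * (X - C β)) := by
        rw [ht₂, sigma_zpow_zero (σ := σ), ← map_mul]
      have htt : dpoly k f 0 * t = t₂ * (X - C β) := by
        apply RatFunc.algebraMap_injective k
        rw [← ht, hq]
      rw [eval_mul, htt]
      simp
    · refine ⟨dpoly k f i * t * pshift k i (dpoly k f (-i) * t₁), ?_, rfl⟩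
      rw [pshift_mul, show dpoly k f i * t * (pshift k i (dpoly k f (-i)) * pshift k i t₁)
          = (dpoly k f i * pshift k i (dpoly k f (-i))) * (t * pshift k i t₁) from by ring]
      rw [eval_mul, eval_dd β f g hfact hroot i hi, zero_mul]
  · -- term B
    obtain ⟨s, hs⟩ := h2
    obtain ⟨s₂, rfl⟩ := hb
    rw [hs, sigma_pow_am σ hσ, ← map_mul]
    by_cases hi : i = -1
    · subst hi
      -- q = am s (up to dpoly 0 = 1), and s is divisible by pshift (-1) g
      rw [show (-1+1 : ℤ) = 0 from by norm_num] at hs ⊢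
      rw [dpoly_nonneg f le_rfl, one_mul] at hs
      obtain ⟨t, ht⟩ := h1
      rw [hs, sigma_pow_am σ hσ] at ht
      rw [← map_mul] at ht
      have hpoly : s * pshift k (-1) (X - C β) = dpoly k f (-1) * t := by
        apply RatFunc.algebraMap_injective k
        rw [← ht]
      rw [dpoly_neg_one, hfact, pshift_mul] at hpoly
      have hcancel : s = pshift k (-1) g * t := by
        have hne : pshift k (-1) (X - C β) ≠ 0 :=
          pshift_ne_zero (-1) (X_sub_C_ne_zero β)
        apply mul_left_cancel₀ hne
        rw [mul_comm (pshift k (-1) (X - C β)) s, hpoly]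
        ring
      refine ⟨dpoly k f 0 * s * pshift k 0 (dpoly k f (-(-1)-1) * s₂), ?_, rfl⟩
      rw [hcancel]
      simp [hroot]
    · have hi1 : i + 1 ≠ 0 := by omega
      refine ⟨dpoly k f (i+1) * s * pshift k (i+1) (dpoly k f (-i-1) * s₂), ?_, rfl⟩
      rw [pshift_mul, show dpoly k f (i+1) * s * (pshift k (i+1) (dpoly k f (-i-1)) * pshift k (i+1) s₂)
          = (dpoly k f (i+1) * pshift k (i+1) (dpoly k f (-(i+1)))) * (s * pshift k (i+1) s₂) from by
            rw [show (-(i+1) : ℤ) = -i-1 from by ring]; ring]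
      rw [eval_mul, eval_dd β f g hfact hroot (i+1) hi1, zero_mul]

end Aux5

/-- With `β` a simple root of `f`, `h = z − β`, `g = f/h` and
`M = hA + xA`:  `M` is a projective right `A`-module, and `M` is a generator of
`Mod-A` (its trace ideal `M*M` is all of `A`) if and only if `gcd(σ⁻¹(g), h) = 1`,
i.e. `σ⁻¹(g) = g(z−1)` and `h = z − β` are coprime in `k[z]`. -/
theorem hA_plus_xA_projective_and_generator_iff
    (k : Type) [Field k] [CharZero k] [IsAlgClosed k]
    (Q : Type) [Ring Q]
    (σ : RatFunc k ≃+* RatFunc k)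
    (hσ : ∀ p : k[X], σ (algebraMap k[X] (RatFunc k) p)
        = algebraMap k[X] (RatFunc k) (p.comp (X + 1)))
    (φ : RatFunc k →+* Q) (hφ : Function.Injective φ)
    (x : Qˣ)
    (hx : ∀ q : RatFunc k, (x : Q) * φ q = φ (σ q) * (x : Q))
    (hbasis : ∀ w : Q, ∃! c : ℤ →₀ RatFunc k,
        w = c.sum fun i q => φ q * ((x ^ i : Qˣ) : Q))
    (f : k[X]) (hf : f.Monic) (hf0 : f ≠ 0)
    (β : k) (g : k[X]) (hfact : f = (X - C β) * g) (hsimpleroot : ¬ (X - C β) ∣ g)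
    (M : AddSubgroup Q)
    (hM : ∀ w : Q, w ∈ M ↔
        ∃ a ∈ gwaSubring k Q σ φ x f, ∃ b ∈ gwaSubring k Q σ φ x f,
          w = φ (algebraMap k[X] (RatFunc k) (X - C β)) * a + (x : Q) * b)
    (hsub : ∀ w ∈ M, ∀ u ∈ gwaSubring k Q σ φ x f, w * u ∈ M) :
    @Module.Projective ((gwaSubring k Q σ φ x f)ᵐᵒᵖ) _ ↥M _
        (subRightModule k Q σ φ x f M hsub) ∧
      ((∀ w ∈ gwaSubring k Q σ φ x f,
          w ∈ AddSubgroup.closure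
            {v : Q | ∃ p : Q, (∀ u ∈ M, p * u ∈ gwaSubring k Q σ φ x f) ∧
              ∃ u ∈ M, v = p * u}) ↔
        IsCoprime (g.comp (X - 1)) (X - C β)) := by
  classical
  set A := gwaSubring k Q σ φ x f with hAdef
  have hxA : (x:Q) ∈ A := Subring.subset_closure (Or.inl (Or.inl rfl))
  have hyA : gwaY k Q σ φ x f ∈ A := Subring.subset_closure (Or.inl (Or.inr rfl))
  have hphiA : ∀ p : k[X], φ (algebraMap k[X] (RatFunc k) p) ∈ A :=
    fun p => Subring.subset_closure (Or.inr ⟨p, rfl⟩)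
  set H : Q := φ (algebraMap k[X] (RatFunc k) (X - C β)) with hHdef
  have hHA : H ∈ A := hphiA _
  have hMsubA : ∀ w ∈ M, w ∈ A := by
    intro w hw
    obtain ⟨a, ha, b, hb, rfl⟩ := (hM w).1 hw
    exact A.add_mem (A.mul_mem hHA ha) (A.mul_mem hxA hb)
  have hHM : H ∈ M := (hM H).2 ⟨1, A.one_mem, 0, A.zero_mem, by rw [mul_one, mul_zero, add_zero]⟩
  have hxM : (x:Q) ∈ M := (hM _).2 ⟨0, A.zero_mem, 1, A.one_mem, by rw [mul_zero, mul_one, zero_add]⟩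
  have hxinv : ∀ q : RatFunc k, ((x⁻¹ : Qˣ) : Q) * φ q = φ (σ.symm q) * ((x⁻¹:Qˣ):Q) := by
    intro q
    have h1 := xzpow_phi σ φ x hx (-1) q
    have h2 : (σ ^ (-1:ℤ)) q = σ.symm q := by rw [zpow_neg_one]; rfl
    rw [h2] at h1
    rwa [zpow_neg_one] at h1
  have hcomp : g.comp (X - 1) = pshift k (-1) g := by
    unfold pshift
    rw [show (((-1:ℤ)):k) = -1 from by norm_num, map_neg, map_one]
    ring_nf
  -- the element σ⁻¹(g)·x⁻¹ composed with H gives y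
  have hygen : φ (algebraMap k[X] (RatFunc k) (pshift k (-1) g)) * ((x⁻¹:Qˣ):Q) * H
      = gwaY k Q σ φ x f := by
    rw [hHdef, mul_assoc, hxinv, ← mul_assoc, ← map_mul, sigma_symm_am σ hσ, ← map_mul]
    unfold gwaY
    rw [sigma_symm_am σ hσ]
    congr 2
    rw [mul_comm (pshift k (-1) g), ← pshift_mul, ← hfact]
  have hcop : IsCoprime (X - C β) g :=
    (Polynomial.irreducible_X_sub_C β).coprime_iff_not_dvd.2 hsimpleroot
  obtain ⟨u, v, huv⟩ := hcop
  constructor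
  · -- Projectivity
    letI inst := subRightModule k Q σ φ x f M hsub
    have hm2 : (x:Q) * φ (algebraMap k[X] (RatFunc k) (pshift k (-1) v)) ∈ M :=
      (hM _).2 ⟨0, A.zero_mem, _, hphiA (pshift k (-1) v), by rw [mul_zero, zero_add]⟩
    have hp1M : ∀ w ∈ M, φ (algebraMap k[X] (RatFunc k) u) * w ∈ A :=
      fun w hw => A.mul_mem (hphiA u) (hMsubA w hw)
    have hp2M : ∀ w ∈ M,
        (φ (algebraMap k[X] (RatFunc k) (pshift k (-1) g)) * ((x⁻¹:Qˣ):Q)) * w ∈ A := by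
      intro w hw
      obtain ⟨a, ha, b, hb, rfl⟩ := (hM w).1 hw
      have e : (φ (algebraMap k[X] (RatFunc k) (pshift k (-1) g)) * ((x⁻¹:Qˣ):Q))
            * (H * a + (x:Q) * b)
          = ((φ (algebraMap k[X] (RatFunc k) (pshift k (-1) g)) * ((x⁻¹:Qˣ):Q)) * H) * a
            + φ (algebraMap k[X] (RatFunc k) (pshift k (-1) g)) * b := by
        rw [mul_add, ← mul_assoc]
        congr 1
        rw [mul_assoc, ← mul_assoc ((x⁻¹:Qˣ):Q), Units.inv_mul, one_mul]
      rw [e]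
      refine A.add_mem (A.mul_mem ?_ ha) (A.mul_mem (hphiA _) hb)
      rw [hygen]
      exact hyA
    have hm2p2 : (x:Q) * φ (algebraMap k[X] (RatFunc k) (pshift k (-1) v))
          * (φ (algebraMap k[X] (RatFunc k) (pshift k (-1) g)) * ((x⁻¹:Qˣ):Q))
        = φ (algebraMap k[X] (RatFunc k) (v * g)) := by
      rw [mul_assoc, ← mul_assoc (φ (algebraMap k[X] (RatFunc k) (pshift k (-1) v))),
        ← map_mul, ← map_mul, ← pshift_mul, ← mul_assoc, hx, sigma_am σ hσ, pshift_pshift,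
        show ((1:ℤ) + -1) = 0 from by norm_num, pshift_zero, mul_assoc, Units.mul_inv, mul_one]
    have hkey : H * φ (algebraMap k[X] (RatFunc k) u)
          + (x:Q) * φ (algebraMap k[X] (RatFunc k) (pshift k (-1) v))
            * (φ (algebraMap k[X] (RatFunc k) (pshift k (-1) g)) * ((x⁻¹:Qˣ):Q)) = 1 := by
      rw [hm2p2, hHdef, ← map_mul, ← map_mul, ← map_add, ← map_add]
      have e : (X - C β) * u + v * g = 1 := by rw [← huv]; ring
      rw [e, map_one, map_one]
    refine Module.Projective.mk ?_
    have hD1 : ∀ w : ↥M, φ (algebraMap k[X] (RatFunc k) u) * (w:Q) ∈ A :=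
      fun w => hp1M _ w.2
    have hD2 : ∀ w : ↥M,
        (φ (algebraMap k[X] (RatFunc k) (pshift k (-1) g)) * ((x⁻¹:Qˣ):Q)) * (w:Q) ∈ A :=
      fun w => hp2M _ w.2
    refine ⟨⟨⟨fun w =>
        Finsupp.single (⟨H, hHM⟩ : ↥M)
          (MulOpposite.op (⟨φ (algebraMap k[X] (RatFunc k) u) * (w:Q), hD1 w⟩ : A))
        + Finsupp.single
            (⟨(x:Q) * φ (algebraMap k[X] (RatFunc k) (pshift k (-1) v)), hm2⟩ : ↥M)
            (MulOpposite.op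
              (⟨(φ (algebraMap k[X] (RatFunc k) (pshift k (-1) g)) * ((x⁻¹:Qˣ):Q)) * (w:Q),
                hD2 w⟩ : A)), ?_⟩, ?_⟩, ?_⟩
    · intro w w'
      have e1 : (MulOpposite.op
            (⟨φ (algebraMap k[X] (RatFunc k) u) * ((w + w' : ↥M):Q), hD1 (w+w')⟩ : A))
          = MulOpposite.op (⟨φ (algebraMap k[X] (RatFunc k) u) * (w:Q), hD1 w⟩ : A)
            + MulOpposite.op (⟨φ (algebraMap k[X] (RatFunc k) u) * (w':Q), hD1 w'⟩ : A) := by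
        rw [← MulOpposite.op_add]
        congr 1
        apply Subtype.ext
        show φ (algebraMap k[X] (RatFunc k) u) * ((w:Q) + (w':Q)) = _ + _
        rw [mul_add]
      have e2 : (MulOpposite.op
            (⟨(φ (algebraMap k[X] (RatFunc k) (pshift k (-1) g)) * ((x⁻¹:Qˣ):Q))
              * ((w + w' : ↥M):Q), hD2 (w+w')⟩ : A))
          = MulOpposite.op (⟨(φ (algebraMap k[X] (RatFunc k) (pshift k (-1) g))
              * ((x⁻¹:Qˣ):Q)) * (w:Q), hD2 w⟩ : A)
            + MulOpposite.op (⟨(φ (algebraMap k[X] (RatFunc k) (pshift k (-1) g))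
              * ((x⁻¹:Qˣ):Q)) * (w':Q), hD2 w'⟩ : A) := by
        rw [← MulOpposite.op_add]
        congr 1
        apply Subtype.ext
        show (φ (algebraMap k[X] (RatFunc k) (pshift k (-1) g)) * ((x⁻¹:Qˣ):Q))
            * ((w:Q) + (w':Q)) = _ + _
        rw [mul_add]
      rw [e1, e2, Finsupp.single_add, Finsupp.single_add]
      abel
    · intro a w
      have e1 : (MulOpposite.op
            (⟨φ (algebraMap k[X] (RatFunc k) u) * ((a • w : ↥M):Q), hD1 (a • w)⟩ : A))
          = a * MulOpposite.op (⟨φ (algebraMap k[X] (RatFunc k) u) * (w:Q), hD1 w⟩ : A) := by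
        rw [show a = MulOpposite.op (MulOpposite.unop a) from rfl, ← MulOpposite.op_mul]
        congr 1
        apply Subtype.ext
        show φ (algebraMap k[X] (RatFunc k) u) * ((w:Q) * ((MulOpposite.unop a : A):Q)) = _
        rw [← mul_assoc]
        rfl
      have e2 : (MulOpposite.op
            (⟨(φ (algebraMap k[X] (RatFunc k) (pshift k (-1) g)) * ((x⁻¹:Qˣ):Q))
              * ((a • w : ↥M):Q), hD2 (a • w)⟩ : A))
          = a * MulOpposite.op (⟨(φ (algebraMap k[X] (RatFunc k) (pshift k (-1) g))
              * ((x⁻¹:Qˣ):Q)) * (w:Q), hD2 w⟩ : A) := by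
        rw [show a = MulOpposite.op (MulOpposite.unop a) from rfl, ← MulOpposite.op_mul]
        congr 1
        apply Subtype.ext
        show (φ (algebraMap k[X] (RatFunc k) (pshift k (-1) g)) * ((x⁻¹:Qˣ):Q))
            * ((w:Q) * ((MulOpposite.unop a : A):Q)) = _
        rw [← mul_assoc]
        rfl
      dsimp only
      rw [e1, e2, smul_add, Finsupp.smul_single, Finsupp.smul_single]
      rfl
    · intro w
      show (Finsupp.linearCombination _ id)
          (Finsupp.single (⟨H, hHM⟩ : ↥M)
            (MulOpposite.op (⟨φ (algebraMap k[X] (RatFunc k) u) * (w:Q), hD1 w⟩ : A))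
          + Finsupp.single
              (⟨(x:Q) * φ (algebraMap k[X] (RatFunc k) (pshift k (-1) v)), hm2⟩ : ↥M)
              (MulOpposite.op
                (⟨(φ (algebraMap k[X] (RatFunc k) (pshift k (-1) g)) * ((x⁻¹:Qˣ):Q)) * (w:Q),
                  hD2 w⟩ : A))) = w
      rw [LinearMap.map_add, Finsupp.linearCombination_single, Finsupp.linearCombination_single]
      apply Subtype.ext
      show H * (φ (algebraMap k[X] (RatFunc k) u) * (w:Q))
          + ((x:Q) * φ (algebraMap k[X] (RatFunc k) (pshift k (-1) v)))
            * ((φ (algebraMap k[X] (RatFunc k) (pshift k (-1) g)) * ((x⁻¹:Qˣ):Q)) * (w:Q))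
          = (w:Q)
      rw [← mul_assoc, ← mul_assoc, ← add_mul, hkey, one_mul]
  · set S : Set Q := {v : Q | ∃ p : Q, (∀ u ∈ M, p * u ∈ A) ∧ ∃ u ∈ M, v = p * u} with hSdef
    constructor
    · -- generator → coprime
      intro hgen
      by_contra hnc
      have hdvd : (X - C β) ∣ g.comp (X - 1) := by
        by_contra hd
        exact hnc (((Polynomial.irreducible_X_sub_C β).coprime_iff_not_dvd.2 hd).symm)
      have hroot : (pshift k (-1) g).eval β = 0 := by
        rw [← hcomp]
        exact dvd_iff_isRoot.1 hdvd
      set G : AddSubgroup Q :=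
        { carrier := {w : Q | CQ φ x hbasis w 0 ∈ V0 β}
          zero_mem' := by
            show CQ φ x hbasis 0 0 ∈ V0 β
            rw [CQ_zero]
            exact (V0 β).zero_mem
          add_mem' := by
            intro w w' hw hw'
            show CQ φ x hbasis (w + w') 0 ∈ V0 β
            rw [CQ_add, Finsupp.add_apply]
            exact (V0 β).add_mem hw hw'
          neg_mem' := by
            intro w hw
            show CQ φ x hbasis (-w) 0 ∈ V0 β
            rw [CQ_neg, Finsupp.neg_apply]
            exact (V0 β).neg_mem hw } with hGdef
      have hSsub : S ⊆ (G : Set Q) := by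
        rintro v ⟨p, hp, w, hw, rfl⟩
        show CQ φ x hbasis (p * w) 0 ∈ V0 β
        obtain ⟨a, ha, b, hb, rfl⟩ := (hM w).1 hw
        have hpH : p * H ∈ A := hp H hHM
        have hpx : p * (x:Q) ∈ A := hp _ hxM
        have hpHc : ∀ i : ℤ, CQ φ x hbasis p i
            * (σ ^ i) (algebraMap k[X] (RatFunc k) (X - C β)) ∈ Vgrp f i := by
          intro i
          have := gwa_le_Bsub σ φ x f hσ hx hbasis hpH i
          rwa [hHdef, CQ_mul_phi σ φ x hbasis hx] at this
        have hpc : ∀ i : ℤ, CQ φ x hbasis p i ∈ Vgrp f (i+1) := by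
          intro i
          have := gwa_le_Bsub σ φ x f hσ hx hbasis hpx (i+1)
          rwa [CQ_mul_x σ φ x hbasis hx, show (i+1-1 : ℤ) = i from by ring] at this
        have hac : ∀ j : ℤ, CQ φ x hbasis a j ∈ Vgrp f j :=
          gwa_le_Bsub σ φ x f hσ hx hbasis ha
        have hbc : ∀ j : ℤ, CQ φ x hbasis b j ∈ Vgrp f j :=
          gwa_le_Bsub σ φ x f hσ hx hbasis hb
        have huc : ∀ j : ℤ, CQ φ x hbasis (H * a + (x:Q) * b) j
            = algebraMap k[X] (RatFunc k) (X - C β) * CQ φ x hbasis a j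
              + σ (CQ φ x hbasis b (j-1)) := by
          intro j
          rw [CQ_add, Finsupp.add_apply, hHdef, CQ_phi_mul σ φ x hbasis hx,
            CQ_x_mul σ φ x hbasis hx]
        rw [CQ_mul σ φ x hbasis hx, conv_apply]
        apply finsupp_sum_mem
        intro i _
        apply finsupp_sum_mem
        intro j _
        split
        · next hij =>
          have hj : j = -i := by omega
          subst hj
          rw [huc (-i)]
          exact key_term β f g σ hσ hfact hroot i _ _ _ (hpHc i) (hpc i) (hac (-i))
            (by
              have := hbc (-i-1)
              exact this)
        · exact (V0 β).zero_mem
      have h1c : (1:Q) ∈ AddSubgroup.closure S := hgen 1 A.one_mem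
      have h1G : (1:Q) ∈ G := (AddSubgroup.closure_le G).2 hSsub h1c
      have : CQ φ x hbasis 1 0 ∈ V0 β := h1G
      rw [CQ_one] at this
      obtain ⟨t, ht0, ht⟩ := this
      rw [Finsupp.single_apply, if_pos rfl] at ht
      have ht1 : t = 1 := by
        apply RatFunc.algebraMap_injective k
        rw [← ht, map_one]
      rw [ht1, eval_one] at ht0
      exact one_ne_zero ht0
    · -- coprime → generator
      intro hcoprime w hw
      obtain ⟨s, t, hst⟩ := hcoprime
      have hright : ∀ w' ∈ A, ∀ v ∈ AddSubgroup.closure S,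
          v * w' ∈ AddSubgroup.closure S := by
        intro w' hw' v hv
        have hle : AddSubgroup.closure S
            ≤ (AddSubgroup.closure S).comap (AddMonoidHom.mulRight w') := by
          apply (AddSubgroup.closure_le _).2
          rintro v' ⟨p, hp, u', hu', rfl⟩
          exact AddSubgroup.subset_closure ⟨p, hp, u' * w', hsub u' hu' w' hw',
            mul_assoc _ _ _⟩
        exact AddSubgroup.mem_comap.1 (hle hv)
      have hleft : ∀ c ∈ A, ∀ v ∈ S, c * v ∈ S := by
        rintro c hc v ⟨p, hp, u', hu', rfl⟩
        refine ⟨c * p, ?_, u', hu', (mul_assoc _ _ _).symm⟩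
        intro u'' hu''
        rw [mul_assoc]
        exact A.mul_mem hc (hp u'' hu'')
      have hHS : H ∈ S :=
        ⟨1, fun u' hu' => by rw [one_mul]; exact hMsubA u' hu', H, hHM, (one_mul H).symm⟩
      have hgS : φ (algebraMap k[X] (RatFunc k) (pshift k (-1) g)) ∈ S := by
        refine ⟨φ (algebraMap k[X] (RatFunc k) (pshift k (-1) g)) * ((x⁻¹:Qˣ):Q),
          ?_, (x:Q), hxM, ?_⟩
        · intro u' hu'
          obtain ⟨a, ha, b, hb, rfl⟩ := (hM u').1 hu'
          have e : φ (algebraMap k[X] (RatFunc k) (pshift k (-1) g)) * ((x⁻¹:Qˣ):Q)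
              * (H * a + (x:Q) * b)
              = (φ (algebraMap k[X] (RatFunc k) (pshift k (-1) g)) * ((x⁻¹:Qˣ):Q) * H) * a
                + φ (algebraMap k[X] (RatFunc k) (pshift k (-1) g)) * b := by
            rw [mul_add, ← mul_assoc]
            congr 1
            rw [mul_assoc, ← mul_assoc ((x⁻¹:Qˣ):Q), Units.inv_mul, one_mul]
          rw [e]
          refine A.add_mem (A.mul_mem ?_ ha) (A.mul_mem (hphiA _) hb)
          rw [hygen]
          exact hyA
        · rw [mul_assoc, Units.inv_mul, mul_one]
      have key : φ (algebraMap k[X] (RatFunc k) t) * H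
          + φ (algebraMap k[X] (RatFunc k) s)
            * φ (algebraMap k[X] (RatFunc k) (pshift k (-1) g)) = 1 := by
        rw [hHdef, ← map_mul, ← map_mul, ← map_mul, ← map_mul, ← map_add, ← map_add]
        have e : t * (X - C β) + s * pshift k (-1) g = 1 := by
          rw [← hcomp]
          linear_combination hst
        rw [e, map_one, map_one]
      have h1c : (1:Q) ∈ AddSubgroup.closure S := by
        rw [← key]
        exact AddSubgroup.add_mem _
          (AddSubgroup.subset_closure (hleft _ (hphiA t) _ hHS))
          (AddSubgroup.subset_closure (hleft _ (hphiA s) _ hgS))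
      have := hright w hw 1 h1c
      rwa [one_mul] at this
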